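/- arXiv:1202.4462 — 6 statements merged into one kernel-verified Lean document; each statement's English description precedes it below -/
import Mathlib

section
/- Let X be a locally finite median graph and let β, γ be two geodesic rays with β(0) = γ(0) such that the set of hyperplanes crossing both β and γ is infinite. Then there exists a geodesic ray σ with σ(0) = β(0) such that the set of hyperplanes crossing σ equals the set of hyperplanes crossing both β and γ. -/
/-- The set of walls separating `u` from `v`. Walls model the Djoković–Winkler
classes (hyperplanes) of a median graph via a halfspace indicator `side`. -/
def sepSet {V W : Type*} (side : W → V → Bool) (u v : V) : Set W :=
  {w | side w u ≠ side w v}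

/-- `γ : ℕ → V` is a (combinatorial) geodesic ray in `Γ`. -/
def IsGeodesicRay {V : Type*} (Γ : SimpleGraph V) (γ : ℕ → V) : Prop :=
  (∀ t : ℕ, Γ.Adj (γ t) (γ (t + 1))) ∧ ∀ s t : ℕ, s ≤ t → Γ.dist (γ s) (γ t) = t - s

/-- The set of walls (hyperplanes) crossed by the ray `γ`. -/
def raysWalls {V W : Type*} (side : W → V → Bool) (γ : ℕ → V) : Set W :=
  {w | ∃ t : ℕ, side w (γ t) ≠ side w (γ (t + 1))}

/-- `m` is a median of `x`, `y`, `z`. -/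
def IsMedianPt {V : Type*} (Γ : SimpleGraph V) (x y z m : V) : Prop :=
  Γ.dist x m + Γ.dist m y = Γ.dist x y ∧
    Γ.dist x m + Γ.dist m z = Γ.dist x z ∧
    Γ.dist y m + Γ.dist m z = Γ.dist y z

/-- A median graph: any three vertices have a unique median. -/
def IsMedianGraph {V : Type*} (Γ : SimpleGraph V) : Prop :=
  ∀ x y z : V, ∃! m : V, IsMedianPt Γ x y z m

/-!
Measure everything from the common origin `x₀ = β 0` by the set `S v` of walls separating `x₀`
from `v`. The median `mₜ` of `x₀, β t, γ t` has `S mₜ = S (β t) ∩ S (γ t)`, so the sets `S mₜ`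
increase and exhaust the common walls `A`. A path along which `S` grows by one wall per step is
a geodesic ray. We walk greedily from `x₀`, always one step towards the first `mₜ` not yet
reached, keeping `S` of the current vertex comparable with every `S mₜ`; since `A` is infinite
the walk never stops, and since each `S mₜ` is finite it cannot stay below `S mₜ` forever, so it
crosses every wall of `A` and no other wall.
-/

open Set
open scoped symmDiff

structure WallsRealizeDist {V W : Type*} (Γ : SimpleGraph V) (side : W → V → Bool) : Prop where
  finite : ∀ u v, (sepSet side u v).Finite
  dist_eq : ∀ u v, Γ.dist u v = (sepSet side u v).ncard

section Walls

variable {V W : Type*} {Γ : SimpleGraph V} {side : W → V → Bool}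

lemma sepSet_self (u : V) : sepSet side u u = ∅ := by
  ext w
  simp [sepSet]

lemma sepSet_eq_symmDiff (x u v : V) :
    sepSet side u v = sepSet side x u ∆ sepSet side x v := by
  ext w
  simp only [sepSet, mem_symmDiff, mem_ofPred_eq]
  cases side w x <;> cases side w u <;> cases side w v <;> decide

lemma raysWalls_eq_iUnion_sepSet (β : ℕ → V) :
    raysWalls side β = ⋃ t, sepSet side (β 0) (β t) := by
  ext w
  simp only [raysWalls, sepSet, mem_ofPred_eq, mem_iUnion]
  constructor
  · rintro ⟨t, ht⟩
    by_cases h : side w (β 0) = side w (β t)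
    · exact ⟨t + 1, h ▸ ht⟩
    · exact ⟨t, h⟩
  · contrapose!
    intro h t
    induction t with
    | zero => rfl
    | succ t ih => exact ih.trans (h t)

lemma sepSet_subset_of_dist_add_dist_le (hW : WallsRealizeDist Γ side) {u m v : V}
    (h : Γ.dist u m + Γ.dist m v ≤ Γ.dist u v) : sepSet side u m ⊆ sepSet side u v := by
  rw [hW.dist_eq, hW.dist_eq, hW.dist_eq, sepSet_eq_symmDiff u m v] at h
  set A := sepSet side u m
  set B := sepSet side u v
  have hDfin : (A ∆ B).Finite := sepSet_eq_symmDiff u m v ▸ hW.finite m v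
  have hinter : A ∩ A ∆ B = A \ B := by
    ext w
    simp only [mem_inter_iff, mem_symmDiff, mem_sdiff]
    tauto
  have hcover : B ⊆ A ∪ A ∆ B := fun w hw => by
    by_cases hwA : w ∈ A
    · exact Or.inl hwA
    · exact Or.inr (Or.inr ⟨hw, hwA⟩)
  have hunion := ncard_union_add_ncard_inter A (A ∆ B) (hW.finite u m) hDfin
  have hle := ncard_le_ncard hcover ((hW.finite u m).union hDfin)
  rw [hinter] at hunion
  have hzero : (A \ B).ncard = 0 := by omega
  exact sdiff_eq_empty.mp ((ncard_eq_zero (hW.finite u m).sdiff).mp hzero)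

lemma sepSet_eq_inter_of_isMedianPt (hW : WallsRealizeDist Γ side) {x y z m : V}
    (hm : IsMedianPt Γ x y z m) :
    sepSet side x m = sepSet side x y ∩ sepSet side x z := by
  obtain ⟨hxy, hxz, hyz⟩ := hm
  refine subset_antisymm
    (subset_inter (sepSet_subset_of_dist_add_dist_le hW hxy.le)
      (sepSet_subset_of_dist_add_dist_le hW hxz.le)) fun w ⟨hwy, hwz⟩ => ?_
  have hym := @sepSet_subset_of_dist_add_dist_le _ _ _ _ hW _ _ _ hyz.le w
  simp only [sepSet, mem_ofPred_eq] at hym hwy hwz ⊢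
  revert hym hwy hwz
  cases side w x <;> cases side w y <;> cases side w z <;> cases side w m <;> decide

lemma IsGeodesicRay.monotone_sepSet (hW : WallsRealizeDist Γ side) {β : ℕ → V}
    (hβ : IsGeodesicRay Γ β) : Monotone fun t => sepSet side (β 0) (β t) := by
  intro s t hst
  refine sepSet_subset_of_dist_add_dist_le hW (le_of_eq ?_)
  rw [hβ.2 0 s s.zero_le, hβ.2 s t hst, hβ.2 0 t t.zero_le]
  omega

lemma dist_eq_ncard_sub_of_sepSet_subset (hW : WallsRealizeDist Γ side) {x u v : V}
    (h : sepSet side x u ⊆ sepSet side x v) :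
    Γ.dist u v = (sepSet side x v).ncard - (sepSet side x u).ncard := by
  rw [hW.dist_eq, sepSet_eq_symmDiff x u v, symmDiff_of_le h, ncard_sdiff h (hW.finite x u)]

lemma isGeodesicRay_of_adj_of_sepSet_subset (hW : WallsRealizeDist Γ side) {x : V} {σ : ℕ → V}
    (hadj : ∀ n, Γ.Adj (σ n) (σ (n + 1)))
    (hsub : ∀ n, sepSet side x (σ n) ⊆ sepSet side x (σ (n + 1))) : IsGeodesicRay Γ σ := by
  have hmono := monotone_nat_of_le_succ hsub
  have hcard : ∀ n, (sepSet side x (σ n)).ncard = (sepSet side x (σ 0)).ncard + n := by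
    intro n
    induction n with
    | zero => rfl
    | succ n ih =>
      have hstep := dist_eq_ncard_sub_of_sepSet_subset hW (hsub n)
      rw [SimpleGraph.dist_eq_one_iff_adj.mpr (hadj n)] at hstep
      omega
  refine ⟨hadj, fun s t hst => ?_⟩
  rw [dist_eq_ncard_sub_of_sepSet_subset hW (hmono hst), hcard s, hcard t]
  omega

lemma exists_adj_sepSet_between (hW : WallsRealizeDist Γ side) {x v u : V}
    (hvu : sepSet side x v ⊆ sepSet side x u) (huv : ¬ sepSet side x u ⊆ sepSet side x v) :
    ∃ b, Γ.Adj v b ∧ sepSet side x v ⊆ sepSet side x b ∧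
      sepSet side x b ⊆ sepSet side x u := by
  have hne : Γ.dist v u ≠ 0 := by
    rw [dist_eq_ncard_sub_of_sepSet_subset hW hvu]
    have hlt := ncard_lt_ncard (ssubset_of_subset_not_subset hvu huv) (hW.finite x u)
    omega
  obtain ⟨p, hp⟩ := SimpleGraph.exists_walk_of_dist_ne_zero hne
  cases p with
  | nil => exact absurd hp.symm hne
  | @cons _ b _ hadj q =>
    have hbetween : Γ.dist v b + Γ.dist b u ≤ Γ.dist v u := by
      have hq := SimpleGraph.dist_le q
      rw [SimpleGraph.dist_eq_one_iff_adj.mpr hadj, ← hp, SimpleGraph.Walk.length_cons]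
      omega
    have hsep := sepSet_subset_of_dist_add_dist_le hW hbetween
    rw [sepSet_eq_symmDiff x v b, sepSet_eq_symmDiff x v u] at hsep
    refine ⟨b, hadj, fun w hw => ?_, fun w hw => ?_⟩ <;> by_contra hw' <;>
      have := @hsep w <;> simp only [mem_symmDiff] at this <;> tauto

lemma exists_not_subset_of_iUnion_infinite {α ι : Type*} {s : ι → Set α} {u : Set α}
    (hinf : (⋃ i, s i).Infinite) (hu : u.Finite) : ∃ i, ¬ s i ⊆ u := by
  by_contra! h
  exact hinf (hu.subset (iUnion_subset h))

lemma exists_adj_step_comparable (hW : WallsRealizeDist Γ side) {x : V} {f : ℕ → V}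
    (hf : Monotone fun t => sepSet side x (f t)) (hinf : (⋃ t, sepSet side x (f t)).Infinite)
    {v : V} (hv : ∀ t, sepSet side x (f t) ⊆ sepSet side x v ∨
      sepSet side x v ⊆ sepSet side x (f t)) :
    ∃ b, (∀ t, sepSet side x (f t) ⊆ sepSet side x b ∨
        sepSet side x b ⊆ sepSet side x (f t)) ∧
      Γ.Adj v b ∧ sepSet side x v ⊆ sepSet side x b := by
  classical
  have hex := exists_not_subset_of_iUnion_infinite hinf (hW.finite x v)
  -- Aiming at the first target not yet reached keeps the next vertex comparable with all targets.
  set t₀ := Nat.find hex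
  have hvt₀ := (hv t₀).resolve_left (Nat.find_spec hex)
  obtain ⟨b, hadj, hvb, hbt₀⟩ := exists_adj_sepSet_between hW hvt₀ (Nat.find_spec hex)
  refine ⟨b, fun t => ?_, hadj, hvb⟩
  rcases lt_or_ge t t₀ with ht | ht
  · exact Or.inl ((not_not.mp (Nat.find_min hex ht)).trans hvb)
  · exact Or.inr (hbt₀.trans (hf ht))

theorem exists_isGeodesicRay_iUnion_sepSet_eq (hW : WallsRealizeDist Γ side) (x : V)
    {f : ℕ → V} (hf : Monotone fun t => sepSet side x (f t))
    (hinf : (⋃ t, sepSet side x (f t)).Infinite) :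
    ∃ σ : ℕ → V, IsGeodesicRay Γ σ ∧ σ 0 = x ∧
      ⋃ n, sepSet side x (σ n) = ⋃ t, sepSet side x (f t) := by
  choose! next hnext using fun v hv => exists_adj_step_comparable hW hf hinf (v := v) hv
  set σ : ℕ → V := fun n => next^[n] x
  have hσsucc : ∀ n, σ (n + 1) = next (σ n) := fun n => Function.iterate_succ_apply' next n x
  have hcomp : ∀ n t, sepSet side x (f t) ⊆ sepSet side x (σ n) ∨
      sepSet side x (σ n) ⊆ sepSet side x (f t) := by
    intro n
    induction n with
    | zero => exact fun t => Or.inr (by simp [σ, sepSet_self])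
    | succ n ih => exact hσsucc n ▸ (hnext (σ n) ih).1
  have hadj : ∀ n, Γ.Adj (σ n) (σ (n + 1)) :=
    fun n => hσsucc n ▸ (hnext (σ n) (hcomp n)).2.1
  have hsub : ∀ n, sepSet side x (σ n) ⊆ sepSet side x (σ (n + 1)) :=
    fun n => hσsucc n ▸ (hnext (σ n) (hcomp n)).2.2
  have hray := isGeodesicRay_of_adj_of_sepSet_subset hW hadj hsub
  refine ⟨σ, hray, rfl,
    subset_antisymm (iUnion_subset fun n => ?_) (iUnion_subset fun t => ?_)⟩
  · obtain ⟨t, ht⟩ := exists_not_subset_of_iUnion_infinite hinf (hW.finite x (σ n))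
    exact subset_iUnion_of_subset t ((hcomp n t).resolve_left ht)
  · by_contra hnot
    have hbelow : ∀ n, sepSet side x (σ n) ⊆ sepSet side x (f t) := fun n =>
      (hcomp n t).resolve_left fun h => hnot (subset_iUnion_of_subset n h)
    have hcard : ∀ n, (sepSet side x (σ n)).ncard = n := fun n => by
      simpa [hW.dist_eq, σ] using hray.2 0 n n.zero_le
    have hle := ncard_le_ncard (hbelow ((sepSet side x (f t)).ncard + 1)) (hW.finite x (f t))
    rw [hcard] at hle
    omega

end Walls

theorem common_walls_ray_exists_general {V W : Type*} (Γ : SimpleGraph V)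
    (hmedian : IsMedianGraph Γ)
    (side : W → V → Bool)
    (hfin : ∀ u v : V, (sepSet side u v).Finite)
    (hdist : ∀ u v : V, Γ.dist u v = (sepSet side u v).ncard)
    (β γ : ℕ → V) (hβ : IsGeodesicRay Γ β) (hγ : IsGeodesicRay Γ γ)
    (h0 : β 0 = γ 0)
    (hinf : (raysWalls side β ∩ raysWalls side γ).Infinite) :
    ∃ σ : ℕ → V, IsGeodesicRay Γ σ ∧ σ 0 = β 0 ∧
      raysWalls side σ = raysWalls side β ∩ raysWalls side γ := by
  have hW : WallsRealizeDist Γ side := ⟨hfin, hdist⟩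
  choose m hm using fun t => (hmedian (β 0) (β t) (γ t)).exists
  have hβmono := hβ.monotone_sepSet hW
  have hγmono := hγ.monotone_sepSet hW
  rw [← h0] at hγmono
  have hmS : ∀ t,
      sepSet side (β 0) (m t) = sepSet side (β 0) (β t) ∩ sepSet side (β 0) (γ t) :=
    fun t => sepSet_eq_inter_of_isMedianPt hW (hm t)
  have hmono : Monotone fun t => sepSet side (β 0) (m t) := fun s t hst => by
    simp only [hmS]
    exact inter_subset_inter (hβmono hst) (hγmono hst)
  have hunion : ⋃ t, sepSet side (β 0) (m t) = raysWalls side β ∩ raysWalls side γ := by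
    simp only [hmS]
    rw [iUnion_inter_of_monotone hβmono hγmono, raysWalls_eq_iUnion_sepSet β,
      raysWalls_eq_iUnion_sepSet γ, h0]
  obtain ⟨σ, hσ, hσ0, hσU⟩ :=
    exists_isGeodesicRay_iUnion_sepSet_eq hW (β 0) hmono (hunion ▸ hinf)
  refine ⟨σ, hσ, hσ0, ?_⟩
  rw [raysWalls_eq_iUnion_sepSet σ, hσ0, hσU, hunion]

/-- in a locally finite median graph, if two geodesic rays `β, γ`
with the same initial vertex cross infinitely many common hyperplanes, then
there is a geodesic ray `σ` from the same initial vertex crossing exactly the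
hyperplanes crossed by both `β` and `γ`. -/
theorem common_walls_ray_exists {V W : Type*} (Γ : SimpleGraph V)
    (hconn : Γ.Connected) (hlf : ∀ v : V, (Γ.neighborSet v).Finite)
    (hmedian : IsMedianGraph Γ)
    (side : W → V → Bool)
    (hfin : ∀ u v : V, (sepSet side u v).Finite)
    (hdist : ∀ u v : V, Γ.dist u v = (sepSet side u v).ncard)
    (β γ : ℕ → V) (hβ : IsGeodesicRay Γ β) (hγ : IsGeodesicRay Γ γ)
    (h0 : β 0 = γ 0)
    (hinf : (raysWalls side β ∩ raysWalls side γ).Infinite) :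
    ∃ σ : ℕ → V, IsGeodesicRay Γ σ ∧ σ 0 = β 0 ∧
      raysWalls side σ = raysWalls side β ∩ raysWalls side γ :=
  common_walls_ray_exists_general Γ hmedian side hfin hdist β γ hβ hγ h0 hinf
end

section
/- Let G act properly and cocompactly by isometries on a geodesic metric space X quasi-isometric to ℝ, and let β: ℝ → X be a (K,C)-quasi-geodesic that is κ-quasi-surjective. Then every geodesic ray γ: [0,∞) → X lies in a bounded neighborhood of β([0,∞)) or of β((-∞,0]). -/
/-- let `X` be a metric space and `β : ℝ → X` a `(K,C)`-quasi-geodesic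
which is `κ`-quasi-surjective (so `X` is quasi-isometric to `ℝ`).  Then every
geodesic ray `γ : [0,∞) → X` lies in a bounded neighborhood of `β([0,∞))` or of
`β((-∞,0])`. -/
theorem geodesic_ray_tracks_half_of_quasi_line
    {X : Type*} [MetricSpace X]
    (K C κ : ℝ) (hK : 1 ≤ K) (hC : 0 ≤ C) (hκ : 0 ≤ κ)
    (β : ℝ → X)
    (hβlower : ∀ s t : ℝ, (1 / K) * |s - t| - C ≤ dist (β s) (β t))
    (hβupper : ∀ s t : ℝ, dist (β s) (β t) ≤ K * |s - t| + C)
    (hβsurj : ∀ x : X, ∃ t : ℝ, dist x (β t) ≤ κ)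
    (γ : ℝ → X)
    (hγ : ∀ s t : ℝ, 0 ≤ s → 0 ≤ t → dist (γ s) (γ t) = |s - t|) :
    ∃ R : ℝ,
      (∀ t : ℝ, 0 ≤ t → ∃ u : ℝ, 0 ≤ u ∧ dist (γ t) (β u) ≤ R) ∨
      (∀ t : ℝ, 0 ≤ t → ∃ u : ℝ, u ≤ 0 ∧ dist (γ t) (β u) ≤ R) := by
  classical
  have hK0 : (0:ℝ) < K := lt_of_lt_of_le one_pos hK
  set f : ℝ → ℝ := fun t => Classical.choose (hβsurj (γ t)) with hfdef
  have hfd : ∀ t, dist (γ t) (β (f t)) ≤ κ := fun t => Classical.choose_spec (hβsurj (γ t))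
  set D := dist (γ 0) (β 0) with hD
  have hD0 : 0 ≤ D := dist_nonneg
  set M := K * (1 + 2*κ + C) with hM
  have hM0 : 0 < M := by positivity
  set T := K * M + D + κ + C + 1 with hT
  have hT0 : 0 < T := by positivity
  -- |f t| is large when t is large
  have hbig : ∀ t, T ≤ t → M < |f t| := by
    intro t ht
    have ht0 : (0:ℝ) ≤ t := le_trans hT0.le ht
    have h1 : dist (γ t) (γ 0) = t := by
      rw [hγ t 0 ht0 le_rfl, sub_zero, abs_of_nonneg ht0]
    have h2 : dist (β (f t)) (β 0) ≤ K * |f t| + C := by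
      have := hβupper (f t) 0
      simpa using this
    have h3 : dist (γ t) (γ 0) ≤ dist (γ t) (β (f t)) + dist (β (f t)) (β 0) + dist (β 0) (γ 0) :=
      dist_triangle4 _ _ _ _
    have h4 : dist (β 0) (γ 0) = D := dist_comm (β 0) (γ 0)
    have h5 : t ≤ κ + (K * |f t| + C) + D := by
      rw [h1, h4] at h3
      linarith [hfd t, h2, h3]
    have h6 : K * M < K * |f t| := by nlinarith
    exact lt_of_mul_lt_mul_left h6 hK0.le
  -- coarse continuity step: nearby points have the same (positive) sign
  have step : ∀ a b : ℝ, T ≤ a → T ≤ b → |a - b| ≤ 1 → 0 < f a → 0 < f b := by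
    intro a b ha hb hab hfa
    have ha0 : (0:ℝ) ≤ a := le_trans hT0.le ha
    have hb0 : (0:ℝ) ≤ b := le_trans hT0.le hb
    have hds : dist (β (f a)) (β (f b)) ≤ κ + |a - b| + κ := by
      have h3 : dist (β (f a)) (β (f b)) ≤
          dist (β (f a)) (γ a) + dist (γ a) (γ b) + dist (γ b) (β (f b)) :=
        dist_triangle4 _ _ _ _
      have h4 : dist (β (f a)) (γ a) = dist (γ a) (β (f a)) := dist_comm _ _
      rw [hγ a b ha0 hb0] at h3
      linarith [hfd a, hfd b, h3, h4.le, h4.ge]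
    have hlow := hβlower (f a) (f b)
    have habs : |f a - f b| ≤ M := by
      have h7 : (1/K) * |f a - f b| ≤ 1 + 2*κ + C := by linarith
      have h8 : |f a - f b| ≤ K * (1 + 2*κ + C) := by
        have h9 := mul_le_mul_of_nonneg_right h7 hK0.le
        calc |f a - f b| = 1 / K * |f a - f b| * K := by field_simp
          _ ≤ (1 + 2*κ + C) * K := h9
          _ = K * (1 + 2*κ + C) := mul_comm _ _
      simpa [hM] using h8
    have hAa : M < |f a| := hbig a ha
    have hAb : M < |f b| := hbig b hb
    by_contra h
    push_neg at h
    have e1 : |f a| = f a := abs_of_pos hfa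
    have e2 : |f b| = -(f b) := abs_of_nonpos h
    nlinarith [le_abs_self (f a - f b)]
  -- propagate along the ray
  have walk : ∀ n : ℕ, ∀ a b : ℝ, T ≤ a → T ≤ b → |a - b| ≤ (n:ℝ) + 1 → 0 < f a → 0 < f b := by
    intro n
    induction n with
    | zero =>
      intro a b ha hb hab hfa
      exact step a b ha hb (by simpa using hab) hfa
    | succ n ih =>
      intro a b ha hb hab hfa
      have hab' : |a - b| ≤ (n:ℝ) + 2 := by
        push_cast at hab ⊢; linarith
      rcases le_total a b with h | h
      · set c := max a (b - 1) with hc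
        have hc1 : T ≤ c := le_trans ha (le_max_left _ _)
        have hca : a ≤ c := le_max_left _ _
        have hcb : c ≤ b := max_le h (by linarith)
        have hcb1 : b - 1 ≤ c := le_max_right _ _
        have hac : |a - c| ≤ (n:ℝ) + 1 := by
          rw [abs_le]
          constructor
          · have : b - a ≤ (n:ℝ) + 2 := by
              have := le_abs_self (b - a); rw [abs_sub_comm] at hab'; linarith
            have : c ≤ a + ((n:ℝ) + 1) := max_le (by linarith [Nat.cast_nonneg (α := ℝ) n]) (by linarith)
            linarith
          · linarith [Nat.cast_nonneg (α := ℝ) n]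
        have hcbd : |c - b| ≤ 1 := by rw [abs_le]; constructor <;> linarith
        exact step c b hc1 hb hcbd (ih a c ha hc1 hac hfa)
      · set c := min a (b + 1) with hc
        have hc1 : T ≤ c := le_trans hb (le_min (le_trans h (le_refl a) |>.trans (le_refl a)) (by linarith)) 
        have hca : c ≤ a := min_le_left _ _
        have hcb : b ≤ c := le_min h (by linarith)
        have hcb1 : c ≤ b + 1 := min_le_right _ _
        have hac : |a - c| ≤ (n:ℝ) + 1 := by
          rw [abs_le]
          constructor
          · linarith [Nat.cast_nonneg (α := ℝ) n]
          · have : a - b ≤ (n:ℝ) + 2 := by linarith [le_abs_self (a - b)]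
            have : a - ((n:ℝ) + 1) ≤ c := le_min (by linarith [Nat.cast_nonneg (α := ℝ) n]) (by linarith)
            linarith
        have hcbd : |c - b| ≤ 1 := by rw [abs_le]; constructor <;> linarith
        exact step c b hc1 hb hcbd (ih a c ha hc1 hac hfa)
  have propagate : ∀ a b : ℝ, T ≤ a → T ≤ b → 0 < f a → 0 < f b := by
    intro a b ha hb hfa
    refine walk ⌈|a - b|⌉₊ a b ha hb ?_ hfa
    have := Nat.le_ceil (|a - b|)
    -- Nat.le_ceil is for ⌈⌉ (Int ceil); use Nat.le_ceil for Nat.ceil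
    exact le_trans (Nat.le_ceil _) (by linarith)
  -- the trivial bound for small times
  have small : ∀ t : ℝ, 0 ≤ t → t ≤ T → dist (γ t) (β 0) ≤ T + D := by
    intro t ht htT
    have h1 : dist (γ t) (β 0) ≤ dist (γ t) (γ 0) + dist (γ 0) (β 0) := dist_triangle _ _ _
    rw [hγ t 0 ht le_rfl, sub_zero, abs_of_nonneg ht] at h1
    linarith
  refine ⟨max κ (T + D), ?_⟩
  by_cases hsign : 0 < f T
  · left
    intro t ht
    rcases le_total T t with h | h
    · exact ⟨f t, (propagate T t le_rfl h hsign).le,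
        le_trans (hfd t) (le_max_left _ _)⟩
    · exact ⟨0, le_rfl, le_trans (small t ht h) (le_max_right _ _)⟩
  · right
    intro t ht
    rcases le_total T t with h | h
    · refine ⟨f t, ?_, le_trans (hfd t) (le_max_left _ _)⟩
      by_contra hpos
      push_neg at hpos
      exact hsign (propagate t T h le_rfl hpos)
    · exact ⟨0, le_rfl, le_trans (small t ht h) (le_max_right _ _)⟩
end

section
/- Let X be a CAT(0) cube complex quasi-isometric to ℝ admitting a proper cocompact group action, let β be a combinatorial geodesic axis of a hyperbolic element, and let γ be any combinatorial geodesic ray lying in the κ-neighborhood of β_+ = β([0,∞)). Then the symmetric difference of the hyperplane sets W(γ) and W(β_+) has cardinality at most 2κ + 2·d(γ(0), β(0)). In particular γ and β_+ are almost-equivalent. -/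
/-- `β : ℤ → V` is a bi-infinite combinatorial geodesic in `Γ`. -/
def IsGeodesicLine {V : Type*} (Γ : SimpleGraph V) (β : ℤ → V) : Prop :=
  (∀ t : ℤ, Γ.Adj (β t) (β (t + 1))) ∧ ∀ s t : ℤ, s ≤ t → Γ.dist (β s) (β t) = (t - s).toNat

/-- The set of hyperplanes crossed by the positive half `β₊ = β([0,∞))` of a
bi-infinite geodesic `β`. -/
def lineWallsPlus {V W : Type*} (side : W → V → Bool) (β : ℤ → V) : Set W :=
  {w | ∃ t : ℤ, 0 ≤ t ∧ side w (β t) ≠ side w (β (t + 1))}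

/-!
A geodesic crosses each wall at most once, so the walls separating `γ 0` from `γ n` are exactly
those crossed by its first `n` edges, and likewise along `β₊`. If `γ n` lies within `κ` of `β m`,
a wall crossed by exactly one of these two initial segments separates `γ 0` from `β 0` or `γ n`
from `β m`, so there are at most `d(γ 0, β 0) + κ` of them. As `n → ∞` we also have `m → ∞`, so
every finite part of `W(γ) ∆ W(β₊)` is seen by such a pair of segments.
-/

open Filter
open scoped symmDiff

theorem Set.encard_le_of_forall_finite_subset {α : Type*} {S : Set α} {k : ℕ}
    (h : ∀ T ⊆ S, T.Finite → T.encard ≤ k) : S.encard ≤ k := by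
  by_contra! hlt
  obtain ⟨T, hTS, hT⟩ := Set.exists_subset_encard_eq (Order.add_one_le_of_lt hlt)
  have hTk := h T hTS (Set.finite_of_encard_eq_coe (k := k + 1) (by simpa using hT))
  rw [hT] at hTk
  exact absurd hTk (by norm_cast; omega)

section Walls

variable {V W : Type*} (side : W → V → Bool)

theorem sepSet_subset_union (u v x : V) :
    sepSet side u x ⊆ sepSet side u v ∪ sepSet side v x := by
  intro w hw
  by_contra h
  simp only [sepSet, Set.mem_union, Set.mem_ofPred_eq, not_or, not_not] at hw h
  exact hw (h.1.trans h.2)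

theorem symmDiff_sepSet_subset (u v u' v' : V) :
    sepSet side u v ∆ sepSet side u' v' ⊆ sepSet side u u' ∪ sepSet side v v' := by
  intro w hw
  simp only [sepSet, Set.mem_symmDiff, Set.mem_union, Set.mem_ofPred_eq] at hw ⊢
  revert hw
  cases side w u <;> cases side w v <;> cases side w u' <;> cases side w v' <;> simp

theorem encard_symmDiff_sepSet_le (u v u' v' : V) :
    (sepSet side u v ∆ sepSet side u' v').encard ≤
      (sepSet side u u').encard + (sepSet side v v').encard :=
  (Set.encard_le_encard (symmDiff_sepSet_subset side u v u' v')).trans (Set.encard_union_le _ _)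

def wallsCrossedBefore (f : ℕ → V) (n : ℕ) : Set W :=
  {w | ∃ t < n, side w (f t) ≠ side w (f (t + 1))}

variable {side}

theorem wallsCrossedBefore_succ (f : ℕ → V) (n : ℕ) :
    wallsCrossedBefore side f (n + 1) =
      wallsCrossedBefore side f n ∪ sepSet side (f n) (f (n + 1)) := by
  ext w
  simp only [wallsCrossedBefore, sepSet, Set.mem_union, Set.mem_ofPred_eq,
    Nat.lt_succ_iff_lt_or_eq, or_and_right, exists_or, exists_eq_left]

theorem wallsCrossedBefore_subset_raysWalls (f : ℕ → V) (n : ℕ) :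
    wallsCrossedBefore side f n ⊆ raysWalls side f :=
  fun _ ⟨t, _, ht⟩ => ⟨t, ht⟩

theorem sepSet_subset_wallsCrossedBefore (f : ℕ → V) (n : ℕ) :
    sepSet side (f 0) (f n) ⊆ wallsCrossedBefore side f n := by
  induction n with
  | zero => simp [sepSet]
  | succ n ih =>
    rw [wallsCrossedBefore_succ]
    exact (sepSet_subset_union side _ (f n) _).trans (Set.union_subset_union_left _ ih)

theorem encard_wallsCrossedBefore_le {f : ℕ → V}
    (hstep : ∀ t, (sepSet side (f t) (f (t + 1))).encard ≤ 1) (n : ℕ) :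
    (wallsCrossedBefore side f n).encard ≤ n := by
  induction n with
  | zero => simp [wallsCrossedBefore]
  | succ n ih =>
    rw [wallsCrossedBefore_succ, Nat.cast_succ]
    exact (Set.encard_union_le _ _).trans (add_le_add ih (hstep n))

theorem sepSet_eq_wallsCrossedBefore {f : ℕ → V}
    (hf : ∀ s t, s ≤ t → (sepSet side (f s) (f t)).encard = (t - s : ℕ)) (n : ℕ) :
    sepSet side (f 0) (f n) = wallsCrossedBefore side f n := by
  have hstep t : (sepSet side (f t) (f (t + 1))).encard ≤ 1 := by
    simp [hf t (t + 1) t.le_succ]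
  have hcard := encard_wallsCrossedBefore_le hstep n
  refine (Set.finite_of_encard_le_coe hcard).eq_of_subset_of_encard_le'
    (sepSet_subset_wallsCrossedBefore f n) ?_
  simpa [hf 0 n n.zero_le] using hcard

theorem eventually_mem_symmDiff_wallsCrossedBefore {f g : ℕ → V} {w : W}
    (hw : w ∈ raysWalls side f ∆ raysWalls side g) :
    ∀ᶠ p in atTop ×ˢ atTop,
      w ∈ wallsCrossedBefore side f p.1 ∆ wallsCrossedBefore side g p.2 := by
  rcases hw with ⟨⟨t, ht⟩, hg⟩ | ⟨⟨t, ht⟩, hf⟩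
  · filter_upwards [(eventually_gt_atTop t).prod_inl atTop] with p hp
    exact Or.inl ⟨⟨t, hp, ht⟩, fun h => hg (wallsCrossedBefore_subset_raysWalls g _ h)⟩
  · filter_upwards [(eventually_gt_atTop t).prod_inr atTop] with p hp
    exact Or.inr ⟨⟨t, hp, ht⟩, fun h => hf (wallsCrossedBefore_subset_raysWalls f _ h)⟩

theorem encard_symmDiff_raysWalls_le {f g : ℕ → V} {k : ℕ}
    (h : ∃ᶠ p in atTop ×ˢ atTop,
      (wallsCrossedBefore side f p.1 ∆ wallsCrossedBefore side g p.2).encard ≤ k) :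
    (raysWalls side f ∆ raysWalls side g).encard ≤ k := by
  refine Set.encard_le_of_forall_finite_subset fun T hT hTfin => ?_
  have hev : ∀ᶠ p in atTop ×ˢ atTop,
      T ⊆ wallsCrossedBefore side f p.1 ∆ wallsCrossedBefore side g p.2 :=
    (eventually_all_finite hTfin).2 fun w hw => eventually_mem_symmDiff_wallsCrossedBefore (hT hw)
  obtain ⟨p, hcard, hsub⟩ := (h.and_eventually hev).exists
  exact (Set.encard_le_encard hsub).trans hcard

theorem lineWallsPlus_eq_raysWalls (β : ℤ → V) :
    lineWallsPlus side β = raysWalls side (fun n : ℕ => β n) := by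
  ext w
  constructor
  · rintro ⟨t, ht, hw⟩
    lift t to ℕ using ht
    exact ⟨t, by simpa using hw⟩
  · rintro ⟨t, hw⟩
    exact ⟨t, t.cast_nonneg, by simpa using hw⟩

end Walls

section Graph

variable {V W : Type*} {Γ : SimpleGraph V} {side : W → V → Bool}

theorem encard_sepSet_eq_dist (hfin : ∀ u v : V, (sepSet side u v).Finite)
    (hdist : ∀ u v : V, Γ.dist u v = (sepSet side u v).ncard) (u v : V) :
    (sepSet side u v).encard = Γ.dist u v := by
  rw [hdist, (hfin u v).cast_ncard_eq]

theorem IsGeodesicLine.isGeodesicRay_natCast {β : ℤ → V} (hβ : IsGeodesicLine Γ β) :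
    IsGeodesicRay Γ (fun n : ℕ => β n) := by
  refine ⟨fun t => by simpa using hβ.1 t, fun s t hst => ?_⟩
  rw [hβ.2 s t (by exact_mod_cast hst)]
  omega

theorem IsGeodesicRay.tendsto_atTop_of_dist_le (hconn : Γ.Connected) {γ b : ℕ → V}
    (hγ : IsGeodesicRay Γ γ) (hb : IsGeodesicRay Γ b) {s : ℕ → ℕ} {κ : ℕ}
    (hs : ∀ n, Γ.dist (γ n) (b (s n)) ≤ κ) : Tendsto s atTop atTop := by
  set D := Γ.dist (γ 0) (b 0)
  refine tendsto_atTop_atTop.2 fun N => ⟨N + D + κ, fun n hn => ?_⟩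
  have : n ≤ D + s n + κ := calc
    n = Γ.dist (γ 0) (γ n) := by rw [hγ.2 0 n n.zero_le, Nat.sub_zero]
    _ ≤ D + Γ.dist (b 0) (b (s n)) + Γ.dist (b (s n)) (γ n) :=
      hconn.dist_triangle.trans (Nat.add_le_add_right hconn.dist_triangle _)
    _ ≤ D + s n + κ := by
      rw [hb.2 0 (s n) (s n).zero_le, Nat.sub_zero, Γ.dist_comm]
      exact Nat.add_le_add_left (hs n) _
  omega

end Graph

theorem walls_symmDiff_bound_for_ray_near_axis_general
    {V W : Type*} (Γ : SimpleGraph V) (hconn : Γ.Connected)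
    (side : W → V → Bool)
    (hfin : ∀ u v : V, (sepSet side u v).Finite)
    (hdist : ∀ u v : V, Γ.dist u v = (sepSet side u v).ncard)
    (β : ℤ → V) (hβ : IsGeodesicLine Γ β)
    (γ : ℕ → V) (hγ : IsGeodesicRay Γ γ)
    (κ : ℕ) (hnear : ∀ t : ℕ, ∃ s : ℤ, 0 ≤ s ∧ Γ.dist (γ t) (β s) ≤ κ) :
    (symmDiff (raysWalls side γ) (lineWallsPlus side β)).Finite ∧
      (symmDiff (raysWalls side γ) (lineWallsPlus side β)).ncard ≤
        2 * κ + 2 * Γ.dist (γ 0) (β 0) := by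
  set b : ℕ → V := fun n => β n
  have hb := hβ.isGeodesicRay_natCast
  have hnear' (t : ℕ) : ∃ m : ℕ, Γ.dist (γ t) (b m) ≤ κ := by
    obtain ⟨s, hs0, hs⟩ := hnear t
    exact ⟨s.toNat, by simpa [b, Int.toNat_of_nonneg hs0] using hs⟩
  choose s hs using hnear'
  have hencard := encard_sepSet_eq_dist hfin hdist
  have hgeod {f : ℕ → V} (hf : IsGeodesicRay Γ f) (m n : ℕ) (hmn : m ≤ n) :
      (sepSet side (f m) (f n)).encard = (n - m : ℕ) := by
    rw [hencard, hf.2 m n hmn]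
  have hclose (n : ℕ) : (wallsCrossedBefore side γ n ∆ wallsCrossedBefore side b (s n)).encard ≤
      (Γ.dist (γ 0) (β 0) + κ : ℕ) := by
    rw [← sepSet_eq_wallsCrossedBefore (hgeod hγ), ← sepSet_eq_wallsCrossedBefore (hgeod hb)]
    refine (encard_symmDiff_sepSet_le side _ _ _ _).trans ?_
    rw [hencard, hencard, Nat.cast_add]
    exact add_le_add le_rfl (by exact_mod_cast hs n)
  have hbound := encard_symmDiff_raysWalls_le
    ((tendsto_id.prodMk (hγ.tendsto_atTop_of_dist_le hconn hb hs)).frequently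
      (Frequently.of_forall hclose))
  rw [lineWallsPlus_eq_raysWalls, ← Set.encard_le_coe_iff_finite_ncard_le]
  exact hbound.trans (by norm_cast; omega)

/-- let `X` be a CAT(0) cube complex (modeled by its median
1-skeleton `Γ` with hyperplane structure `side`), `β` a combinatorial geodesic
axis of a hyperbolic automorphism `φ`, and `γ` a combinatorial geodesic ray in
the `κ`-neighborhood of `β₊ = β([0,∞))`.  Then
`#(W(γ) ∆ W(β₊)) ≤ 2κ + 2·d(γ(0), β(0))`; in particular `γ` and `β₊` are
almost-equivalent. -/
theorem walls_symmDiff_bound_for_ray_near_axis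
    {V W : Type*} (Γ : SimpleGraph V) (hconn : Γ.Connected)
    (side : W → V → Bool)
    (hfin : ∀ u v : V, (sepSet side u v).Finite)
    (hdist : ∀ u v : V, Γ.dist u v = (sepSet side u v).ncard)
    (β : ℤ → V) (hβ : IsGeodesicLine Γ β)
    (φ : Γ ≃g Γ) (L : ℤ) (hL : 0 < L) (haxis : ∀ t : ℤ, φ (β t) = β (t + L))
    (γ : ℕ → V) (hγ : IsGeodesicRay Γ γ)
    (κ : ℕ) (hnear : ∀ t : ℕ, ∃ s : ℤ, 0 ≤ s ∧ Γ.dist (γ t) (β s) ≤ κ) :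
    (symmDiff (raysWalls side γ) (lineWallsPlus side β)).Finite ∧
      (symmDiff (raysWalls side γ) (lineWallsPlus side β)).ncard ≤
        2 * κ + 2 * Γ.dist (γ 0) (β 0) :=
  walls_symmDiff_bound_for_ray_near_axis_general Γ hconn side hfin hdist β hβ γ hγ κ hnear
end

section
/- Let T ≅ ℤ^n be the translation subgroup of an n-dimensional crystallographic group G acting on ℝ^n, and let H be a G-essential hyperplane of a CAT(0) cube complex X on which G acts properly and cocompactly. Then the stabilizer in T of H is a subgroup isomorphic to ℤ^{n-1}. -/
/-!
Let `K = T ⊓ Stab(H)`, a subgroup of `T ≅ ℤⁿ`. If `K` had finite index in `G`, the `K`-orbit of a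
vertex would be coarsely dense; but `K` preserves both halfspaces of `H`, while essentiality
provides orbit points arbitrarily deep in each of them. Hence `T / K` is infinite.

If `a, b ∈ T` generated a copy of `ℤ²` meeting `Stab(H)` trivially, the hyperplanes
`(a^p b^q)⁻¹ H` would be pairwise distinct, and only finitely many of them separate two given
vertices. So the side of `H` containing `a^p b^q x` is the same for all but finitely many `(p, q)`,
and this generic side does not depend on `x`. The centralizers of `a` and `b` have finite index, so
`a` and `b` move all orbit points a bounded distance; for `x` deep enough in a halfspace some
column `{a^k b^q x | q ∈ ℤ}` with `a^k x` still in that halfspace has constant side, which forces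
the generic side to be the side of `x`. Taking `x` deep in either halfspace is a contradiction, so
`T / K` has rank at most one, and `K ≅ ℤⁿ⁻¹`.
-/

open Filter MulAction Module

theorem Subgroup.exists_finite_forall_mul_eq {G : Type*} [Group G] (K : Subgroup G)
    [K.FiniteIndex] : ∃ S : Set G, S.Finite ∧ ∀ g, ∃ k ∈ K, ∃ r ∈ S, k * r = g := by
  obtain ⟨S, hS, -⟩ := K.exists_isComplement_right 1
  refine ⟨S, Nat.finite_of_card_ne_zero (hS.card_right ▸ FiniteIndex.index_ne_zero), fun g => ?_⟩
  obtain ⟨⟨k, r⟩, hkr, -⟩ := hS.existsUnique g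
  exact ⟨k, k.2, r, r.2, hkr⟩

theorem Commute.zpow_mul_zpow_add {G : Type*} [Group G] {a b : G} (hab : Commute a b)
    (p q : ℤ × ℤ) :
    a ^ (p + q).1 * b ^ (p + q).2 = a ^ p.1 * b ^ p.2 * (a ^ q.1 * b ^ q.2) := by
  simp only [Prod.fst_add, Prod.snd_add, zpow_add, mul_assoc]
  congr 1
  rw [← mul_assoc, ← mul_assoc, (hab.zpow_zpow q.1 p.2).eq]

theorem Function.Periodic.eq_of_period_one {α : Type*} {f : ℤ → α} (h : Function.Periodic f 1)
    (k l : ℤ) : f k = f l := by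
  simpa using (h.int_mul_eq k).trans (h.int_mul_eq l).symm

theorem exists_eventually_eq_of_finite_flips {α : Type*} (f : ℤ × ℤ → α)
    (h₁ : {p | f (p + (1, 0)) ≠ f p}.Finite) (h₂ : {p | f (p + (0, 1)) ≠ f p}.Finite) :
    ∃ c, ∀ᶠ p in cofinite, f p = c := by
  have hrow : ∀ l ∉ Prod.snd '' {p | f (p + (1, 0)) ≠ f p}, ∀ k k', f (k, l) = f (k', l) :=
    fun l hl => Function.Periodic.eq_of_period_one fun k => by
      by_contra h
      exact hl ⟨(k, l), by simpa using h, rfl⟩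
  have hcol : ∀ k ∉ Prod.fst '' {p | f (p + (0, 1)) ≠ f p}, ∀ l l', f (k, l) = f (k, l') :=
    fun k hk => Function.Periodic.eq_of_period_one fun l => by
      by_contra h
      exact hk ⟨(k, l), by simpa using h, rfl⟩
  obtain ⟨l₀, hl₀⟩ := (h₁.image Prod.snd).infinite_compl.nonempty
  obtain ⟨k₀, hk₀⟩ := (h₂.image Prod.fst).infinite_compl.nonempty
  refine ⟨f (k₀, l₀), ((h₂.image Prod.fst).prod (h₁.image Prod.snd)).subset fun p hp => ?_⟩
  by_contra hbad
  rw [Set.mem_prod, not_and_or] at hbad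
  rcases hbad with hp₁ | hp₂
  · exact hp ((hcol p.1 hp₁ p.2 l₀).trans (hrow l₀ hl₀ p.1 k₀))
  · exact hp ((hrow p.2 hp₂ p.1 k₀).trans (hcol k₀ hk₀ p.2 l₀))

theorem eq_of_eventually_eq_of_periodic {α : Type*} {f : ℤ × ℤ → α} {c : α}
    (hc : ∀ᶠ p in cofinite, f p = c) {k : ℤ} (hk : Function.Periodic (fun l => f (k, l)) 1) :
    f (k, 0) = c := by
  obtain ⟨l, hl⟩ := ((Prod.mk_right_injective k).tendsto_cofinite.eventually hc).exists
  exact (hk.eq_of_period_one 0 l).trans hl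

theorem Set.exists_nat_le_notMem_of_ncard_le {S : Set ℤ} (hS : S.Finite) {C : ℕ}
    (h : S.ncard ≤ C) : ∃ k : ℕ, k ≤ C ∧ (k : ℤ) ∉ S := by
  by_contra! hall
  have := Set.ncard_le_ncard_of_injOn (s := Set.Iic C) ((↑) : ℕ → ℤ) hall
    Nat.cast_injective.injOn hS
  rw [Set.ncard_Iic_nat] at this
  omega

theorem Module.finrank_le_one_of_forall_exists_smul_add_smul_eq_zero {R Q : Type*} [Ring R]
    [StrongRankCondition R] [AddCommGroup Q] [Module R Q] [Module.Finite R Q]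
    (h : ∀ x y : Q, ∃ p : R × R, p ≠ 0 ∧ p.1 • x + p.2 • y = 0) : finrank R Q ≤ 1 := by
  have := nontrivial_of_invariantBasisNumber R
  by_contra! hlt
  obtain ⟨v, hv⟩ := le_rank_iff.mp (Module.finrank_eq_rank R Q ▸ (Nat.cast_le.mpr hlt) :
    ((2 : ℕ) : Cardinal) ≤ Module.rank R Q)
  rw [show v = ![v 0, v 1] by ext i; fin_cases i <;> rfl] at hv
  obtain ⟨p, hp, hpv⟩ := h (v 0) (v 1)
  exact hp (Prod.ext_iff.mpr (LinearIndependent.pair_iff.mp hv p.1 p.2 hpv))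

theorem Module.finrank_int_pos_of_infinite {Q : Type*} [AddCommGroup Q] [Module.Finite ℤ Q]
    [Infinite Q] : 0 < finrank ℤ Q := by
  by_contra! h
  have := Module.finite_of_fg_torsion Q (Module.finrank_eq_zero_iff_isTorsion.mp (by omega))
  exact not_finite Q

theorem Submodule.finrank_add_one_eq_of_forall_exists_smul_add_smul_mem {M : Type*}
    [AddCommGroup M] [Module.Finite ℤ M] (N : Submodule ℤ M) [Infinite (M ⧸ N)]
    (hdep : ∀ x y : M, ∃ p : ℤ × ℤ, p ≠ 0 ∧ p.1 • x + p.2 • y ∈ N) :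
    finrank ℤ N + 1 = finrank ℤ M := by
  have hle : finrank ℤ (M ⧸ N) ≤ 1 := by
    refine Module.finrank_le_one_of_forall_exists_smul_add_smul_eq_zero fun x y => ?_
    obtain ⟨x, rfl⟩ := N.mkQ_surjective x
    obtain ⟨y, rfl⟩ := N.mkQ_surjective y
    obtain ⟨p, hp, hmem⟩ := hdep x y
    refine ⟨p, hp, ?_⟩
    rwa [← map_smul, ← map_smul, ← map_add, Submodule.mkQ_apply, Submodule.Quotient.mk_eq_zero]
  have := N.finrank_quotient_add_finrank
  have := Module.finrank_int_pos_of_infinite (Q := M ⧸ N)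
  omega

theorem Subgroup.nonempty_mulEquiv_fin_sub_one_of_forall_exists_zpow_mul_zpow_mem {A : Type*}
    [Group A] {n : ℕ} (e : A ≃* (Fin n → Multiplicative ℤ)) (K : Subgroup A)
    (hK : ¬ K.FiniteIndex) (hdep : ∀ a b : A, ∃ p : ℤ × ℤ, p ≠ 0 ∧ a ^ p.1 * b ^ p.2 ∈ K) :
    Nonempty (K ≃* (Fin (n - 1) → Multiplicative ℤ)) := by
  let f : A ≃* Multiplicative (Fin n → ℤ) := e.trans (MulEquiv.funMultiplicative _ _).symm
  let L := K.map f.toMonoidHom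
  let N : Submodule ℤ (Fin n → ℤ) := AddSubgroup.toIntSubmodule (Subgroup.toAddSubgroup' L)
  have : Infinite ((Fin n → ℤ) ⧸ N) := by
    refine not_finite_iff_infinite.mp fun hfin => hK ⟨?_⟩
    rw [← Subgroup.index_map_equiv K f]
    exact (@AddSubgroup.finiteIndex_of_finite_quotient _ _ (Subgroup.toAddSubgroup' L)
      hfin).index_ne_zero
  have hN := N.finrank_add_one_eq_of_forall_exists_smul_add_smul_mem fun x y => by
    obtain ⟨p, hp, hmem⟩ := hdep (f.symm (.ofAdd x)) (f.symm (.ofAdd y))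
    refine ⟨p, hp, ?_⟩
    have : f.symm (.ofAdd (p.1 • x + p.2 • y)) =
        f.symm (.ofAdd x) ^ p.1 * f.symm (.ofAdd y) ^ p.2 := by
      rw [ofAdd_add, ofAdd_zsmul, ofAdd_zsmul, map_mul, map_zpow, map_zpow]
    exact Subgroup.mem_map_equiv.mpr (this ▸ hmem)
  rw [Module.finrank_fin_fun] at hN
  let b := Module.finBasisOfFinrankEq ℤ N (by omega : finrank ℤ N = n - 1)
  -- `N` is `L` read additively.
  let g : L ≃* Multiplicative N := MulEquiv.refl _
  exact ⟨((f.subgroupMap K).trans g).trans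
    (b.equivFun.toAddEquiv.toMultiplicative.trans (MulEquiv.funMultiplicative _ _))⟩

def IsDeep {V W : Type*} (Γ : SimpleGraph V) (side : W → V → Bool) (H : W) (m : ℕ) (x : V) :
    Prop :=
  ∀ u, side H u ≠ side H x → m ≤ Γ.dist x u

def IsEssential {V W : Type*} (Γ : SimpleGraph V) (side : W → V → Bool) (G : Type*) [SMul G V]
    (H : W) : Prop :=
  ∀ (v : V) (m : ℕ), ∃ g g' : G,
    side H (g • v) = true ∧ side H (g' • v) = false ∧
    (∀ u : V, side H u = false → m ≤ Γ.dist (g • v) u) ∧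
    (∀ u : V, side H u = true → m ≤ Γ.dist (g' • v) u)

section Deep

variable {V W : Type*} {Γ : SimpleGraph V} {side : W → V → Bool} {H : W}

theorem IsDeep.side_eq {m : ℕ} {x y : V} (h : IsDeep Γ side H m x)
    (hxy : Γ.dist x y < m) : side H y = side H x := by
  by_contra hne
  exact (h y hne).not_gt hxy

theorem IsEssential.exists_isDeep {G : Type*} [SMul G V] (h : IsEssential Γ side G H) (v : V)
    (m : ℕ) (b : Bool) : ∃ g : G, side H (g • v) = b ∧ IsDeep Γ side H m (g • v) := by
  obtain ⟨g, g', hg, hg', hdeep, hdeep'⟩ := h v m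
  cases b
  · exact ⟨g', hg', fun u hu => hdeep' u (by simpa [hg'] using hu)⟩
  · exact ⟨g, hg, fun u hu => hdeep u (by simpa [hg] using hu)⟩

end Deep

section Action

variable {V W G : Type*} [Group G] [MulAction G V] [MulAction G W] {Γ : SimpleGraph V}
  {side : W → V → Bool}

theorem SimpleGraph.Connected.dist_smul_smul (hconn : Γ.Connected)
    (hadj : ∀ (g : G) (u v : V), Γ.Adj u v → Γ.Adj (g • u) (g • v)) (g : G) (u v : V) :
    Γ.dist (g • u) (g • v) = Γ.dist u v := by
  have hle : ∀ (h : G) (x y : V), Γ.dist (h • x) (h • y) ≤ Γ.dist x y := fun h x y => by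
    obtain ⟨p, hp⟩ := hconn.exists_walk_length_eq_dist x y
    let f : Γ →g Γ := ⟨(h • ·), hadj h _ _⟩
    exact (SimpleGraph.dist_le (p.map f)).trans_eq (by simp [hp])
  refine (hle g u v).antisymm ?_
  simpa using hle g⁻¹ (g • u) (g • v)

theorem SimpleGraph.Connected.dist_pow_smul_le (hconn : Γ.Connected)
    (hadj : ∀ (g : G) (u v : V), Γ.Adj u v → Γ.Adj (g • u) (g • v)) (a : G) (x : V) (k : ℕ) :
    Γ.dist x (a ^ k • x) ≤ k * Γ.dist x (a • x) := by
  induction k with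
  | zero => simp
  | succ k ih =>
    calc Γ.dist x (a ^ (k + 1) • x)
          ≤ Γ.dist x (a ^ k • x) + Γ.dist (a ^ k • x) (a ^ (k + 1) • x) := hconn.dist_triangle
      _ = Γ.dist x (a ^ k • x) + Γ.dist x (a • x) := by
          rw [pow_succ, mul_smul, hconn.dist_smul_smul hadj]
      _ ≤ (k + 1) * Γ.dist x (a • x) := by rw [add_mul, one_mul]; gcongr

theorem SimpleGraph.Connected.exists_forall_dist_smul_le_of_finiteIndex (hconn : Γ.Connected)
    (hadj : ∀ (g : G) (u v : V), Γ.Adj u v → Γ.Adj (g • u) (g • v)) (K : Subgroup G)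
    [K.FiniteIndex] (v : V) : ∃ D, ∀ g : G, ∃ k ∈ K, Γ.dist (g • v) (k • v) ≤ D := by
  obtain ⟨S, hS, hKS⟩ := K.exists_finite_forall_mul_eq
  obtain ⟨D, hD⟩ := (hS.image fun r => Γ.dist (r • v) v).bddAbove
  refine ⟨D, fun g => ?_⟩
  obtain ⟨k, hk, r, hr, rfl⟩ := hKS g
  refine ⟨k, hk, ?_⟩
  rw [mul_smul, hconn.dist_smul_smul hadj]
  exact hD ⟨r, hr, rfl⟩

theorem SimpleGraph.Connected.exists_forall_dist_smul_le_of_finiteIndex_centralizer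
    (hconn : Γ.Connected) (hadj : ∀ (g : G) (u v : V), Γ.Adj u v → Γ.Adj (g • u) (g • v)) (a : G)
    [(Subgroup.centralizer {a}).FiniteIndex] (v : V) :
    ∃ C, ∀ g : G, Γ.dist (g • v) (a • g • v) ≤ C := by
  obtain ⟨S, hS, hKS⟩ := (Subgroup.centralizer {a}).exists_finite_forall_mul_eq
  obtain ⟨C, hC⟩ := (hS.image fun r => Γ.dist (r • v) (a • r • v)).bddAbove
  refine ⟨C, fun g => ?_⟩
  obtain ⟨z, hz, r, hr, rfl⟩ := hKS g
  have hza : a * z = z * a := (Subgroup.mem_centralizer_singleton_iff.mp hz).symm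
  rw [mul_smul, smul_smul a z, hza, mul_smul, hconn.dist_smul_smul hadj]
  exact hC ⟨r, hr, rfl⟩

theorem side_smul_of_mem_stabilizer
    (hside : ∀ (g : G) (w : W) (v : V), side (g • w) (g • v) = side w v) {H : W} {k : G}
    (hk : k ∈ stabilizer G H) (v : V) : side H (k • v) = side H v := by
  simpa [mem_stabilizer_iff.mp hk] using hside k H v

theorem IsEssential.not_finiteIndex_stabilizer (hconn : Γ.Connected)
    (hadj : ∀ (g : G) (u v : V), Γ.Adj u v → Γ.Adj (g • u) (g • v))
    (hside : ∀ (g : G) (w : W) (v : V), side (g • w) (g • v) = side w v) {H : W}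
    (hess : IsEssential Γ side G H) : ¬ (stabilizer G H).FiniteIndex := by
  intro
  obtain ⟨v⟩ := hconn.nonempty
  obtain ⟨D, hD⟩ := hconn.exists_forall_dist_smul_le_of_finiteIndex hadj (stabilizer G H) v
  have hv : ∀ b : Bool, side H v = b := fun b => by
    obtain ⟨g, hgb, hdeep⟩ := hess.exists_isDeep v (D + 1) b
    obtain ⟨k, hk, hdk⟩ := hD g
    rw [← side_smul_of_mem_stabilizer hside hk, hdeep.side_eq (by omega), hgb]
  simpa using (hv true).symm.trans (hv false)

end Action

section SidePattern

variable {V W G : Type*} [Group G] [MulAction G V] {side : W → V → Bool} {H : W} {a b : G}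

variable (side H a b) in
def sidePattern (x : V) (p : ℤ × ℤ) : Bool :=
  side H ((a ^ p.1 * b ^ p.2) • x)

theorem sidePattern_smul (hab : Commute a b) (x : V) (p q : ℤ × ℤ) :
    sidePattern side H a b ((a ^ q.1 * b ^ q.2) • x) p = sidePattern side H a b x (p + q) := by
  simp only [sidePattern, smul_smul, hab.zpow_mul_zpow_add]

theorem sidePattern_eq_side_inv_smul [MulAction G W]
    (hside : ∀ (g : G) (w : W) (v : V), side (g • w) (g • v) = side w v) (x : V) (p : ℤ × ℤ) :
    sidePattern side H a b x p = side ((a ^ p.1 * b ^ p.2)⁻¹ • H) x := by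
  rw [sidePattern, ← hside (a ^ p.1 * b ^ p.2) ((a ^ p.1 * b ^ p.2)⁻¹ • H) x, smul_inv_smul]

theorem injective_inv_smul_of_commute [MulAction G W] (hab : Commute a b)
    (hinj : ∀ p : ℤ × ℤ, a ^ p.1 * b ^ p.2 ∈ stabilizer G H → p = 0) :
    Function.Injective fun p : ℤ × ℤ => (a ^ p.1 * b ^ p.2)⁻¹ • H := by
  intro p q hpq
  have hq : a ^ q.1 * b ^ q.2 = a ^ (q - p).1 * b ^ (q - p).2 * (a ^ p.1 * b ^ p.2) := by
    rw [← hab.zpow_mul_zpow_add, sub_add_cancel]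
  have hstab : (a ^ (q - p).1 * b ^ (q - p).2) • H = H := by
    have := congrArg ((a ^ q.1 * b ^ q.2) • ·) hpq
    simpa [hq, mul_smul] using this
  exact (sub_eq_zero.mp (hinj _ hstab)).symm

theorem setOf_sidePattern_ne_eq_preimage [MulAction G W]
    (hside : ∀ (g : G) (w : W) (v : V), side (g • w) (g • v) = side w v) (u v : V) :
    {p | sidePattern side H a b u p ≠ sidePattern side H a b v p} =
      (fun p : ℤ × ℤ => (a ^ p.1 * b ^ p.2)⁻¹ • H) ⁻¹' {w | side w u ≠ side w v} := by
  ext p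
  simp [sidePattern_eq_side_inv_smul hside]

end SidePattern

section Essential

variable {V W G : Type*} [Group G] [MulAction G V] [MulAction G W] {Γ : SimpleGraph V}
  {side : W → V → Bool} {H : W} {a b : G}

theorem IsDeep.eventually_sidePattern_eq (hconn : Γ.Connected)
    (hfin : ∀ u v : V, {w : W | side w u ≠ side w v}.Finite)
    (hdist : ∀ u v : V, Γ.dist u v = {w : W | side w u ≠ side w v}.ncard)
    (hadj : ∀ (g : G) (u v : V), Γ.Adj u v → Γ.Adj (g • u) (g • v))
    (hside : ∀ (g : G) (w : W) (v : V), side (g • w) (g • v) = side w v)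
    (hab : Commute a b) (hinj : ∀ p : ℤ × ℤ, a ^ p.1 * b ^ p.2 ∈ stabilizer G H → p = 0)
    {x : V} {Ca Cb : ℕ} (ha : Γ.dist x (a • x) ≤ Ca) (hb : Γ.dist x (b • x) ≤ Cb)
    (hdeep : IsDeep Γ side H (Ca * Cb + 1) x) :
    ∀ᶠ p in cofinite, sidePattern side H a b x p = side H x := by
  have hwall := injective_inv_smul_of_commute hab hinj
  have hdiff : ∀ u v, {p | sidePattern side H a b u p ≠ sidePattern side H a b v p}.Finite :=
    fun u v => setOf_sidePattern_ne_eq_preimage hside u v ▸ (hfin u v).preimage hwall.injOn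
  have hshift : ∀ q : ℤ × ℤ,
      {p | sidePattern side H a b x (p + q) ≠ sidePattern side H a b x p}.Finite := fun q => by
    simpa only [← sidePattern_smul hab] using hdiff ((a ^ q.1 * b ^ q.2) • x) x
  obtain ⟨c, hc⟩ := exists_eventually_eq_of_finite_flips _ (hshift (1, 0)) (hshift (0, 1))
  have hflips : ∀ l, sidePattern side H a b (b • x) l = sidePattern side H a b x (l + (0, 1)) :=
    fun l => by simpa using sidePattern_smul hab x l (0, 1)
  -- A flip of the pattern in the `b`-direction is a wall separating `x` from `b • x`.
  have hcard :
      {p | sidePattern side H a b (b • x) p ≠ sidePattern side H a b x p}.ncard ≤ Cb := by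
    rw [setOf_sidePattern_ne_eq_preimage hside]
    calc _ ≤ {w | side w (b • x) ≠ side w x}.ncard :=
          Set.ncard_le_ncard_of_injOn (fun p : ℤ × ℤ => (a ^ p.1 * b ^ p.2)⁻¹ • H)
            (fun _ hp => hp) hwall.injOn (hfin _ _)
      _ = Γ.dist x (b • x) := by rw [← hdist, Γ.dist_comm]
      _ ≤ Cb := hb
  obtain ⟨k, hkC, hk⟩ := Set.exists_nat_le_notMem_of_ncard_le ((hdiff _ _).image Prod.fst)
    ((Set.ncard_image_le (hdiff _ _)).trans hcard)
  have hcol : Function.Periodic (fun l => sidePattern side H a b x (k, l)) 1 := fun l => by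
    by_contra hne
    exact hk ⟨(k, l), by simpa [hflips] using hne, rfl⟩
  have hdk : Γ.dist x (a ^ k • x) < Ca * Cb + 1 := by
    have := (hconn.dist_pow_smul_le hadj a x k).trans (Nat.mul_le_mul hkC ha)
    rw [Nat.mul_comm] at this
    omega
  have hck : c = side H x := by
    rw [← eq_of_eventually_eq_of_periodic hc hcol, ← hdeep.side_eq hdk]
    simp [sidePattern]
  exact hck ▸ hc

theorem IsEssential.exists_zpow_mul_zpow_mem_stabilizer (hconn : Γ.Connected)
    (hfin : ∀ u v : V, {w : W | side w u ≠ side w v}.Finite)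
    (hdist : ∀ u v : V, Γ.dist u v = {w : W | side w u ≠ side w v}.ncard)
    (hadj : ∀ (g : G) (u v : V), Γ.Adj u v → Γ.Adj (g • u) (g • v))
    (hside : ∀ (g : G) (w : W) (v : V), side (g • w) (g • v) = side w v)
    (hess : IsEssential Γ side G H) (hab : Commute a b)
    [(Subgroup.centralizer {a}).FiniteIndex] [(Subgroup.centralizer {b}).FiniteIndex] :
    ∃ p : ℤ × ℤ, p ≠ 0 ∧ a ^ p.1 * b ^ p.2 ∈ stabilizer G H := by
  by_contra! hne
  have hinj : ∀ p : ℤ × ℤ, a ^ p.1 * b ^ p.2 ∈ stabilizer G H → p = 0 :=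
    fun p hp => by_contra fun h => hne p h hp
  obtain ⟨v⟩ := hconn.nonempty
  obtain ⟨Ca, hCa⟩ := hconn.exists_forall_dist_smul_le_of_finiteIndex_centralizer hadj a v
  obtain ⟨Cb, hCb⟩ := hconn.exists_forall_dist_smul_le_of_finiteIndex_centralizer hadj b v
  have hpattern : ∀ s : Bool, ∃ x, ∀ᶠ p in cofinite, sidePattern side H a b x p = s := by
    intro s
    obtain ⟨g, hgs, hdeep⟩ := hess.exists_isDeep v (Ca * Cb + 1) s
    exact ⟨g • v, hgs ▸ hdeep.eventually_sidePattern_eq hconn hfin hdist hadj hside hab hinj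
      (hCa g) (hCb g)⟩
  obtain ⟨x, hx⟩ := hpattern true
  obtain ⟨y, hy⟩ := hpattern false
  have hxy : ∀ᶠ p in cofinite, sidePattern side H a b x p = sidePattern side H a b y p :=
    eventually_cofinite.mpr (setOf_sidePattern_ne_eq_preimage hside x y ▸
      (hfin x y).preimage (injective_inv_smul_of_commute hab hinj).injOn)
  obtain ⟨p, hpx, hpy, hpxy⟩ := (hx.and (hy.and hxy)).exists
  simp_all

end Essential

theorem stabilizer_of_essential_hyperplane_in_translations_general
    {V W : Type*} (Γ : SimpleGraph V) (hconn : Γ.Connected)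
    (side : W → V → Bool)
    (hfin : ∀ u v : V, {w : W | side w u ≠ side w v}.Finite)
    (hdist : ∀ u v : V, Γ.dist u v = {w : W | side w u ≠ side w v}.ncard)
    (G : Type*) [Group G] [MulAction G V] [MulAction G W]
    (hadj : ∀ (g : G) (u v : V), Γ.Adj u v → Γ.Adj (g • u) (g • v))
    (hside : ∀ (g : G) (w : W) (v : V), side (g • w) (g • v) = side w v)
    (n : ℕ)
    (T : Subgroup G) [T.FiniteIndex]
    (hT : Nonempty (T ≃* (Fin n → Multiplicative ℤ)))
    (H : W)
    (hessential : ∀ (v : V) (m : ℕ), ∃ g g' : G,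
      side H (g • v) = true ∧ side H (g' • v) = false ∧
      (∀ u : V, side H u = false → m ≤ Γ.dist (g • v) u) ∧
      (∀ u : V, side H u = true → m ≤ Γ.dist (g' • v) u)) :
    Nonempty (↥(T ⊓ MulAction.stabilizer G H) ≃* (Fin (n - 1) → Multiplicative ℤ)) := by
  obtain ⟨ψ⟩ := hT
  have hcomm : ∀ x y : T, Commute x y := fun x y => ψ.injective (by simp only [map_mul, mul_comm])
  have hcent : ∀ a ∈ T, (Subgroup.centralizer {a}).FiniteIndex := fun a ha =>
    Subgroup.finiteIndex_of_le fun t ht =>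
      Subgroup.mem_centralizer_singleton_iff.mpr (congrArg Subtype.val (hcomm ⟨t, ht⟩ ⟨a, ha⟩))
  have hK : ¬ ((T ⊓ stabilizer G H).subgroupOf T).FiniteIndex := fun hK => by
    have : (T ⊓ stabilizer G H).FiniteIndex := ⟨by
      rw [← Subgroup.relIndex_mul_index inf_le_left]
      exact mul_ne_zero hK.index_ne_zero Subgroup.FiniteIndex.index_ne_zero⟩
    exact IsEssential.not_finiteIndex_stabilizer hconn hadj hside hessential
      (Subgroup.finiteIndex_of_le (H := T ⊓ stabilizer G H) inf_le_right)
  obtain ⟨e⟩ := Subgroup.nonempty_mulEquiv_fin_sub_one_of_forall_exists_zpow_mul_zpow_mem ψ _ hK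
    fun a b => by
      have := hcent a a.2
      have := hcent b b.2
      obtain ⟨p, hp, hmem⟩ := IsEssential.exists_zpow_mul_zpow_mem_stabilizer hconn hfin hdist
        hadj hside hessential (Subtype.ext_iff.mp (hcomm a b))
      exact ⟨p, hp, Subgroup.mem_subgroupOf.mpr
        ⟨mul_mem (zpow_mem a.2 _) (zpow_mem b.2 _), by simpa using hmem⟩⟩
  exact ⟨(Subgroup.subgroupOfEquivOfLe inf_le_left).symm.trans e⟩

/-- let `G` be an `n`-dimensional crystallographic group (so its
translation subgroup `T ≅ ℤⁿ` is normal of finite index) acting properly and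
cocompactly by automorphisms on a CAT(0) cube complex, modeled by its 1-skeleton
`Γ` with hyperplane structure `side`.  If `H` is a `G`-essential hyperplane,
then the stabilizer of `H` in `T` is isomorphic to `ℤ^{n-1}`. -/
theorem stabilizer_of_essential_hyperplane_in_translations
    {V W : Type*} (Γ : SimpleGraph V) (hconn : Γ.Connected)
    (side : W → V → Bool)
    (hfin : ∀ u v : V, {w : W | side w u ≠ side w v}.Finite)
    (hdist : ∀ u v : V, Γ.dist u v = {w : W | side w u ≠ side w v}.ncard)
    (G : Type*) [Group G] [MulAction G V] [MulAction G W]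
    (hadj : ∀ (g : G) (u v : V), Γ.Adj u v → Γ.Adj (g • u) (g • v))
    (hside : ∀ (g : G) (w : W) (v : V), side (g • w) (g • v) = side w v)
    (hproper : ∀ (v : V) (R : ℕ), {g : G | Γ.dist v (g • v) ≤ R}.Finite)
    (hcocompact : ∃ R : ℕ, ∀ u v : V, ∃ g : G, Γ.dist u (g • v) ≤ R)
    (n : ℕ) (hn : 1 ≤ n)
    (T : Subgroup G) [T.Normal] [T.FiniteIndex]
    (hT : Nonempty (T ≃* (Fin n → Multiplicative ℤ)))
    (H : W)
    (hessential : ∀ (v : V) (m : ℕ), ∃ g g' : G,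
      side H (g • v) = true ∧ side H (g' • v) = false ∧
      (∀ u : V, side H u = false → m ≤ Γ.dist (g • v) u) ∧
      (∀ u : V, side H u = true → m ≤ Γ.dist (g' • v) u)) :
    Nonempty (↥(T ⊓ MulAction.stabilizer G H) ≃* (Fin (n - 1) → Multiplicative ℤ)) :=
  stabilizer_of_essential_hyperplane_in_translations_general Γ hconn side hfin hdist G hadj hside n
    T hT H hessential
end

section
/- Let G be a crystallographic group with translation subgroup T, acting properly and cocompactly on a CAT(0) cube complex X, and let η: X → ℝ^n be a G-equivariant (λ,μ)-quasi-isometry. Then every translation t ∈ T fixes the simplicial boundary of X pointwise; more precisely, for every combinatorial geodesic ray γ, the symmetric difference W(γ) △ W(tγ) is finite. -/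
theorem Set.finite_of_forall_finite_subset_ncard_le {α : Type*} {S : Set α} (k : ℕ)
    (h : ∀ F ⊆ S, F.Finite → F.ncard ≤ k) : S.Finite := by
  by_contra hS
  obtain ⟨F, hFS, hFfin, hF⟩ := Set.Infinite.exists_subset_ncard_eq hS (k + 1)
  have := h F hFS hFfin
  omega

section WallSpace

open scoped Pointwise

variable {V W : Type*} {Γ : SimpleGraph V} {side : W → V → Bool}

def separatingWalls (side : W → V → Bool) (u v : V) : Set W :=
  {w | side w u ≠ side w v}

theorem separatingWalls_subset_union (u v x : V) :
    separatingWalls side u x ⊆ separatingWalls side u v ∪ separatingWalls side v x := by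
  intro w hw
  by_contra h
  simp only [separatingWalls, Set.mem_union, Set.mem_ofPred_eq, not_or, not_not] at hw h
  exact hw (h.1.trans h.2)

theorem separatingWalls_smul {G : Type*} [Group G] [MulAction G V] [MulAction G W]
    (hside : ∀ (g : G) (w : W) (v : V), side (g • w) (g • v) = side w v) (g : G) (u v : V) :
    separatingWalls side (g • u) (g • v) = g • separatingWalls side u v := by
  ext w
  rw [Set.mem_smul_set_iff_inv_smul_mem]
  simp only [separatingWalls, Set.mem_ofPred_eq]
  rw [← hside g⁻¹ w (g • u), ← hside g⁻¹ w (g • v), inv_smul_smul, inv_smul_smul]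

variable (hfin : ∀ u v : V, (separatingWalls side u v).Finite)
  (hdist : ∀ u v : V, Γ.dist u v = (separatingWalls side u v).ncard)
include hfin hdist

/-- A hyperplane separating `v` from both `u` and `x` would be counted twice in
`d(u, v) + d(v, x)` but not at all in `d(u, x)`. -/
theorem disjoint_separatingWalls_of_dist_eq_add {u v x : V}
    (h : Γ.dist u x = Γ.dist u v + Γ.dist v x) :
    Disjoint (separatingWalls side u v) (separatingWalls side v x) := by
  rw [Set.disjoint_left]
  intro w huv hvx
  have hux : side w u = side w x := by
    revert huv hvx
    simp only [separatingWalls, Set.mem_ofPred_eq]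
    cases side w u <;> cases side w v <;> cases side w x <;> decide
  have hsub : separatingWalls side u x ⊆
      (separatingWalls side u v ∪ separatingWalls side v x) \ {w} := by
    intro w' hw'
    refine ⟨separatingWalls_subset_union u v x hw', ?_⟩
    rintro rfl
    exact hw' hux
  have hunion_fin := (hfin u v).union (hfin v x)
  have hlt := Set.ncard_sdiff_singleton_lt_of_mem (Set.mem_union_left _ huv) hunion_fin
  have hle := Set.ncard_le_ncard hsub hunion_fin.sdiff
  have hunion := Set.ncard_union_le (separatingWalls side u v) (separatingWalls side v x)
  rw [hdist, hdist, hdist] at h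
  omega

theorem separatingWalls_subset_of_dist_eq_add {u v x : V}
    (h : Γ.dist u x = Γ.dist u v + Γ.dist v x) :
    separatingWalls side u v ⊆ separatingWalls side u x ∧
      separatingWalls side v x ⊆ separatingWalls side u x := by
  have hdisj := disjoint_separatingWalls_of_dist_eq_add hfin hdist h
  constructor
  · intro w huv
    have hvx : side w v = side w x := not_not.1 (hdisj.notMem_of_mem_left huv)
    exact fun hux => huv (hux.trans hvx.symm)
  · intro w hvx
    have huv : side w u = side w v := not_not.1 (hdisj.notMem_of_mem_right hvx)
    exact fun hux => hvx (huv.symm.trans hux)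

theorem IsGeodesicRay.mem_separatingWalls {γ : ℕ → V} (hγ : IsGeodesicRay Γ γ) {w : W}
    {k : ℕ} (hk : side w (γ k) ≠ side w (γ (k + 1))) {a b : ℕ} (ha : a ≤ k) (hb : k < b) :
    w ∈ separatingWalls side (γ a) (γ b) := by
  have hakb : Γ.dist (γ a) (γ b) = Γ.dist (γ a) (γ k) + Γ.dist (γ k) (γ b) := by
    rw [hγ.2 a b (by omega), hγ.2 a k ha, hγ.2 k b hb.le]
    omega
  have hkb : Γ.dist (γ k) (γ b) = Γ.dist (γ k) (γ (k + 1)) + Γ.dist (γ (k + 1)) (γ b) := by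
    rw [hγ.2 k b hb.le, hγ.2 k (k + 1) k.le_succ, hγ.2 (k + 1) b hb]
    omega
  exact (separatingWalls_subset_of_dist_eq_add hfin hdist hakb).2
    ((separatingWalls_subset_of_dist_eq_add hfin hdist hkb).1 hk)

omit hfin hdist in
theorem side_eq_of_notMem_raysWalls {δ : ℕ → V} {w : W} (hw : w ∉ raysWalls side δ) :
    ∀ s, side w (δ s) = side w (δ 0)
  | 0 => rfl
  | s + 1 => (not_not.1 fun h => hw ⟨s, Ne.symm h⟩).trans (side_eq_of_notMem_raysWalls hw s)

theorem IsGeodesicRay.mem_separatingWalls_of_mem_raysWalls_diff {γ δ : ℕ → V}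
    (hγ : IsGeodesicRay Γ γ) {w : W} (hw : w ∈ raysWalls side γ \ raysWalls side δ) {k s : ℕ}
    (hk : side w (γ k) ≠ side w (γ (k + 1))) (hks : k < s) :
    w ∈ separatingWalls side (γ 0) (δ 0) ∪ separatingWalls side (γ s) (δ s) := by
  have hγ0s := hγ.mem_separatingWalls hfin hdist hk k.zero_le hks
  have hδ := side_eq_of_notMem_raysWalls hw.2 s
  by_contra h
  simp only [separatingWalls, Set.mem_union, Set.mem_ofPred_eq, not_or, not_not] at h hγ0s
  exact hγ0s (h.1.trans (hδ.symm.trans h.2.symm))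

theorem IsGeodesicRay.finite_raysWalls_diff {γ δ : ℕ → V} (hγ : IsGeodesicRay Γ γ) {D : ℕ}
    (hD : ∀ s, Γ.dist (γ s) (δ s) ≤ D) :
    (raysWalls side γ \ raysWalls side δ).Finite := by
  refine Set.finite_of_forall_finite_subset_ncard_le (D + D) fun F hF hFfin => ?_
  choose! k hk using fun w (hw : w ∈ F) => (hF hw).1
  set s := hFfin.toFinset.sup k + 1
  have hFsub : F ⊆ separatingWalls side (γ 0) (δ 0) ∪ separatingWalls side (γ s) (δ s) :=
    fun w hw => hγ.mem_separatingWalls_of_mem_raysWalls_diff hfin hdist (hF hw) (hk w hw)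
      (Nat.lt_succ_of_le (Finset.le_sup (hFfin.mem_toFinset.2 hw)))
  calc F.ncard
      ≤ (separatingWalls side (γ 0) (δ 0) ∪ separatingWalls side (γ s) (δ s)).ncard :=
        Set.ncard_le_ncard hFsub ((hfin _ _).union (hfin _ _))
    _ ≤ (separatingWalls side (γ 0) (δ 0)).ncard + (separatingWalls side (γ s) (δ s)).ncard :=
        Set.ncard_union_le _ _
    _ ≤ D + D := by
        rw [← hdist, ← hdist]
        exact add_le_add (hD 0) (hD s)

theorem IsGeodesicRay.finite_symmDiff_raysWalls {γ δ : ℕ → V} (hγ : IsGeodesicRay Γ γ)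
    (hδ : IsGeodesicRay Γ δ) {D : ℕ} (hD : ∀ s, Γ.dist (γ s) (δ s) ≤ D) :
    (symmDiff (raysWalls side γ) (raysWalls side δ)).Finite :=
  (hγ.finite_raysWalls_diff hfin hdist hD).union
    (hδ.finite_raysWalls_diff hfin hdist fun s => Γ.dist_comm ▸ hD s)

omit hfin in
theorem dist_smul_smul {G : Type*} [Group G] [MulAction G V] [MulAction G W]
    (hside : ∀ (g : G) (w : W) (v : V), side (g • w) (g • v) = side w v) (g : G) (u v : V) :
    Γ.dist (g • u) (g • v) = Γ.dist u v := by
  rw [hdist, hdist, separatingWalls_smul hside, Set.ncard_smul_set]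

omit hfin in
theorem IsGeodesicRay.smul {G : Type*} [Group G] [MulAction G V] [MulAction G W]
    (hside : ∀ (g : G) (w : W) (v : V), side (g • w) (g • v) = side w v) {γ : ℕ → V}
    (hγ : IsGeodesicRay Γ γ) (g : G) : IsGeodesicRay Γ (fun s => g • γ s) := by
  refine ⟨fun s => ?_, fun a b hab => ?_⟩
  · rw [← SimpleGraph.dist_eq_one_iff_adj, dist_smul_smul hdist hside, hγ.2 s (s + 1) s.le_succ]
    omega
  · rw [dist_smul_smul hdist hside, hγ.2 a b hab]

end WallSpace

theorem graph_dist_le_of_dist_map_le {V E : Type*} [PseudoMetricSpace E]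
    {Γ : SimpleGraph V} {η : V → E} {lam mu r : ℝ} (hlam : 0 < lam)
    (hη : ∀ u v : V, (1 / lam) * (Γ.dist u v : ℝ) - mu ≤ dist (η u) (η v)) {u v : V}
    (h : dist (η u) (η v) ≤ r) : (Γ.dist u v : ℝ) ≤ lam * (r + mu) := by
  have := hη u v
  rw [one_div_mul_eq_div] at this
  exact (div_le_iff₀' hlam).1 (by linarith)

theorem translations_fix_simplicial_boundary_general
    {V W : Type*} (Γ : SimpleGraph V)
    (side : W → V → Bool)
    (hfin : ∀ u v : V, {w : W | side w u ≠ side w v}.Finite)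
    (hdist : ∀ u v : V, Γ.dist u v = {w : W | side w u ≠ side w v}.ncard)
    (G : Type*) [Group G] [MulAction G V] [MulAction G W]
    (hside : ∀ (g : G) (w : W) (v : V), side (g • w) (g • v) = side w v)
    (n : ℕ) [MulAction G (EuclideanSpace ℝ (Fin n))]
    (T : Subgroup G)
    (htrans : ∀ t ∈ T, ∃ c : EuclideanSpace ℝ (Fin n),
      ∀ x : EuclideanSpace ℝ (Fin n), t • x = x + c)
    (lam mu : ℝ) (hlam : 1 ≤ lam)
    (η : V → EuclideanSpace ℝ (Fin n))
    (hequiv : ∀ (g : G) (v : V), η (g • v) = g • η v)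
    (hηlower : ∀ u v : V, (1 / lam) * (Γ.dist u v : ℝ) - mu ≤ dist (η u) (η v)) :
    ∀ t ∈ T, ∀ γ : ℕ → V, IsGeodesicRay Γ γ →
      (symmDiff (raysWalls side γ) (raysWalls side (fun s => t • γ s))).Finite := by
  intro t ht γ hγ
  obtain ⟨c, hc⟩ := htrans t ht
  have hmove : ∀ v, Γ.dist v (t • v) ≤ ⌈lam * (‖c‖ + mu)⌉₊ := fun v => by
    have hηmove : dist (η v) (η (t • v)) ≤ ‖c‖ := by
      rw [hequiv, hc, dist_self_add_right]
    exact_mod_cast (graph_dist_le_of_dist_map_le (by linarith) hηlower hηmove).trans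
      (Nat.le_ceil _)
  exact hγ.finite_symmDiff_raysWalls hfin hdist (hγ.smul hdist hside t) fun s => hmove (γ s)

/-- let `G` be a crystallographic group with translation subgroup
`T`, acting properly and cocompactly by automorphisms on a CAT(0) cube complex
(modeled by its 1-skeleton `Γ` with hyperplane structure `side`), and let
`η : X → ℝⁿ` be a `G`-equivariant `(λ,μ)`-quasi-isometry.  Then every
translation `t ∈ T` fixes the simplicial boundary pointwise: for every
combinatorial geodesic ray `γ`, the symmetric difference `W(γ) ∆ W(tγ)` is
finite, i.e. `[γ] = t[γ]`. -/
theorem translations_fix_simplicial_boundary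
    {V W : Type*} (Γ : SimpleGraph V) (hconn : Γ.Connected)
    (side : W → V → Bool)
    (hfin : ∀ u v : V, {w : W | side w u ≠ side w v}.Finite)
    (hdist : ∀ u v : V, Γ.dist u v = {w : W | side w u ≠ side w v}.ncard)
    (G : Type*) [Group G] [MulAction G V] [MulAction G W]
    (hadj : ∀ (g : G) (u v : V), Γ.Adj u v → Γ.Adj (g • u) (g • v))
    (hside : ∀ (g : G) (w : W) (v : V), side (g • w) (g • v) = side w v)
    (hproper : ∀ (v : V) (R : ℕ), {g : G | Γ.dist v (g • v) ≤ R}.Finite)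
    (hcocompact : ∃ R : ℕ, ∀ u v : V, ∃ g : G, Γ.dist u (g • v) ≤ R)
    (n : ℕ) [MulAction G (EuclideanSpace ℝ (Fin n))]
    (hisom : ∀ (g : G) (x y : EuclideanSpace ℝ (Fin n)),
      dist (g • x) (g • y) = dist x y)
    (T : Subgroup G) [T.Normal] [T.FiniteIndex]
    (htrans : ∀ t ∈ T, ∃ c : EuclideanSpace ℝ (Fin n),
      ∀ x : EuclideanSpace ℝ (Fin n), t • x = x + c)
    (lam mu : ℝ) (hlam : 1 ≤ lam) (hmu : 0 ≤ mu)
    (η : V → EuclideanSpace ℝ (Fin n))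
    (hequiv : ∀ (g : G) (v : V), η (g • v) = g • η v)
    (hηlower : ∀ u v : V, (1 / lam) * (Γ.dist u v : ℝ) - mu ≤ dist (η u) (η v))
    (hηupper : ∀ u v : V, dist (η u) (η v) ≤ lam * (Γ.dist u v : ℝ) + mu)
    (hηsurj : ∃ κ : ℝ, ∀ x : EuclideanSpace ℝ (Fin n), ∃ v : V, dist x (η v) ≤ κ) :
    ∀ t ∈ T, ∀ γ : ℕ → V, IsGeodesicRay Γ γ →
      (symmDiff (raysWalls side γ) (raysWalls side (fun s => t • γ s))).Finite :=
  translations_fix_simplicial_boundary_general Γ side hfin hdist G hside n T htrans lam mu hlam η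
    hequiv hηlower
end

section
/- Let t_1, ..., t_n be a basis of ℝ^n, let X_i = span{t_j : j ≠ i}, and consider the collection of walls consisting of all ℤ-translates {X_i + k t_i : k ∈ ℤ, 1 ≤ i ≤ n}. Then for any two points r_1, r_2 ∈ ℝ^n, writing r_1 - r_2 = Σ ν_i t_i, the number of walls separating r_1 from r_2 is at least Σ_i |ν_i| - n, and consequently ‖r_1 - r_2‖ ≤ max_i ‖t_i‖ · (#(r_1,r_2) + n), establishing the linear separation property. -/
/-!
The walls parallel to `Xᵢ` that separate `r₁` from `r₂` are indexed by the integers strictly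
between the `i`-th coordinates of the two points. These form an open interval of length `|νᵢ|`,
which contains at least `|νᵢ| - 1` integers; summing over `i` counts the walls, and the triangle
inequality applied to `r₁ - r₂ = Σ νᵢ tᵢ` turns the count into the norm bound.
-/

/-- The walls of the standard cubulation: for a basis `t` of `ℝⁿ`, the wall
indexed by `(i, k)` is the affine hyperplane `span{t_j : j ≠ i} + k tᵢ`; it
separates `r₁` from `r₂` when their `i`-th coordinates lie strictly on opposite
sides of `k`. -/
def sepWalls {n : ℕ} (t : Module.Basis (Fin n) ℝ (EuclideanSpace ℝ (Fin n)))
    (r₁ r₂ : EuclideanSpace ℝ (Fin n)) : Set (Fin n × ℤ) :=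
  {p | (t.repr r₁ p.1 < (p.2 : ℝ) ∧ (p.2 : ℝ) < t.repr r₂ p.1) ∨
       (t.repr r₂ p.1 < (p.2 : ℝ) ∧ (p.2 : ℝ) < t.repr r₁ p.1)}

open Finset

lemma lt_and_lt_or_lt_and_lt_iff {α : Type*} [LinearOrder α] {a b x : α} :
    (a < x ∧ x < b) ∨ (b < x ∧ x < a) ↔ min a b < x ∧ x < max a b := by
  simp only [min_lt_iff, lt_max_iff]
  constructor
  · rintro (h | h) <;> tauto
  · rintro ⟨ha | hb, ha' | hb'⟩
    · exact absurd ha (lt_asymm ha')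
    · exact .inl ⟨ha, hb'⟩
    · exact .inr ⟨hb, ha'⟩
    · exact absurd hb (lt_asymm hb')

section FloorRing

variable {α : Type*} [Ring α] [LinearOrder α] [FloorRing α]

lemma Finset.mem_Ioo_floor_ceil {x y : α} {k : ℤ} :
    k ∈ Ioo ⌊x⌋ ⌈y⌉ ↔ x < k ∧ (k : α) < y := by
  rw [mem_Ioo, Int.floor_lt, Int.lt_ceil]

lemma Finset.sub_sub_one_le_card_Ioo_floor_ceil [IsStrictOrderedRing α] (x y : α) :
    y - x - 1 ≤ #(Ioo ⌊x⌋ ⌈y⌉) := by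
  have hcard : ((⌈y⌉ - ⌊x⌋ - 1 : ℤ) : α) ≤ #(Ioo ⌊x⌋ ⌈y⌉) := by
    rw [Int.card_Ioo]
    exact_mod_cast Int.self_le_toNat _
  push_cast at hcard
  exact (sub_le_sub_right (sub_le_sub (Int.le_ceil y) (Int.floor_le x)) 1).trans hcard

end FloorRing

lemma Set.finite_and_ncard_setOf_snd_mem {ι β : Type*} [Fintype ι] (T : ι → Finset β) :
    {p : ι × β | p.2 ∈ T p.1}.Finite ∧
      {p : ι × β | p.2 ∈ T p.1}.ncard = ∑ i, #(T i) := by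
  set e := Equiv.setProdEquivSigma {p : ι × β | p.2 ∈ T p.1}
  have : ∀ i, Finite {y : β | (i, y) ∈ {p : ι × β | p.2 ∈ T p.1}} := fun i =>
    (T i).finite_toSet
  refine ⟨Set.finite_coe_iff.mp (Finite.of_equiv _ e.symm), ?_⟩
  rw [← Nat.card_coe_set_eq, Nat.card_congr e, Nat.card_sigma]
  exact sum_congr rfl fun i _ => Nat.card_eq_finsetCard (T i)

theorem Module.Basis.norm_le_iSup_norm_mul_sum_abs_repr {ι E : Type*} [Fintype ι]
    [SeminormedAddCommGroup E] [Module ℝ E] [NormSMulClass ℝ E] (t : Module.Basis ι ℝ E)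
    (v : E) :
    ‖v‖ ≤ (⨆ i, ‖t i‖) * ∑ i, |t.repr v i| := by
  have hle : ∀ i, ‖t i‖ ≤ ⨆ i, ‖t i‖ :=
    le_ciSup (f := fun i => ‖t i‖) (Set.finite_range _).bddAbove
  calc ‖v‖ = ‖∑ i, t.repr v i • t i‖ := by rw [t.sum_repr]
    _ ≤ ∑ i, ‖t.repr v i • t i‖ := norm_sum_le _ _
    _ = ∑ i, |t.repr v i| * ‖t i‖ := by simp only [_root_.norm_smul, Real.norm_eq_abs]
    _ ≤ ∑ i, |t.repr v i| * ⨆ i, ‖t i‖ := by gcongr; exact hle _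
    _ = (⨆ i, ‖t i‖) * ∑ i, |t.repr v i| := by rw [← sum_mul, mul_comm]

lemma sepWalls_eq_setOf_mem_Ioo {n : ℕ}
    (t : Module.Basis (Fin n) ℝ (EuclideanSpace ℝ (Fin n))) (r₁ r₂ : EuclideanSpace ℝ (Fin n)) :
    sepWalls t r₁ r₂ = {p | p.2 ∈ Ioo ⌊min (t.repr r₁ p.1) (t.repr r₂ p.1)⌋
      ⌈max (t.repr r₁ p.1) (t.repr r₂ p.1)⌉} := by
  ext p
  rw [sepWalls, Set.mem_ofPred_eq, Set.mem_ofPred_eq, Finset.mem_Ioo_floor_ceil,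
    lt_and_lt_or_lt_and_lt_iff]

/-- for the standard cubulation walls built from a basis
`t₁, …, tₙ` of `ℝⁿ`, writing `r₁ - r₂ = Σ νᵢ tᵢ`, the number `#(r₁,r₂)` of
walls separating `r₁` from `r₂` satisfies `Σᵢ |νᵢ| - n ≤ #(r₁,r₂)`, and
consequently `‖r₁ - r₂‖ ≤ (maxᵢ ‖tᵢ‖) · (#(r₁,r₂) + n)`: the linear separation
property holds. -/
theorem standard_cubulation_linear_separation
    (n : ℕ) (t : Module.Basis (Fin n) ℝ (EuclideanSpace ℝ (Fin n)))
    (r₁ r₂ : EuclideanSpace ℝ (Fin n)) :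
    (sepWalls t r₁ r₂).Finite ∧
    (∑ i : Fin n, |t.repr (r₁ - r₂) i|) - n ≤ ((sepWalls t r₁ r₂).ncard : ℝ) ∧
    ‖r₁ - r₂‖ ≤ (⨆ i : Fin n, ‖t i‖) * (((sepWalls t r₁ r₂).ncard : ℝ) + n) := by
  obtain ⟨hfinite, hncard⟩ := Set.finite_and_ncard_setOf_snd_mem fun i =>
    Ioo ⌊min (t.repr r₁ i) (t.repr r₂ i)⌋ ⌈max (t.repr r₁ i) (t.repr r₂ i)⌉
  rw [← sepWalls_eq_setOf_mem_Ioo] at hfinite hncard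
  have hcount : (∑ i, |t.repr (r₁ - r₂) i|) - n ≤ ((sepWalls t r₁ r₂).ncard : ℝ) := by
    rw [hncard, Nat.cast_sum]
    calc (∑ i, |t.repr (r₁ - r₂) i|) - n = ∑ i, (|t.repr (r₁ - r₂) i| - 1) := by
          simp [sum_sub_distrib]
      _ ≤ _ := sum_le_sum fun i _ => by
          rw [map_sub, Finsupp.sub_apply, ← max_sub_min_eq_abs']
          exact sub_sub_one_le_card_Ioo_floor_ceil _ _
  refine ⟨hfinite, hcount, ?_⟩
  calc ‖r₁ - r₂‖ ≤ (⨆ i, ‖t i‖) * ∑ i, |t.repr (r₁ - r₂) i| :=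
        t.norm_le_iSup_norm_mul_sum_abs_repr _
    _ ≤ (⨆ i, ‖t i‖) * (((sepWalls t r₁ r₂).ncard : ℝ) + n) := by
      gcongr
      · exact Real.iSup_nonneg fun _ => norm_nonneg _
      · linarith
end
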